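/- arXiv:1803.05953 — 8 statements merged into one kernel-verified Lean document; each statement's English description precedes it below -/
import Mathlib

section
/- For complex a1,b1,a2,b2 and nonnegative integers p1,p2, the top generalized Stirling number satisfies S_{a1,b1}^{a2,b2,p2}(p1, p1+p2) = a1^{p1} · a2^{p2}. -/
/-!
The alternating sum defining `gsn _ _ _ _ p1 p2 k` is `k!⁻¹` times the `k`-th forward difference
at `0` of the polynomial `(a1 x + b1)^p1 (a2 x + b2)^p2`. For `k = p1 + p2` this polynomial has
degree at most `k`, so its `k`-th forward difference is the constant `k!` times its `x^k`
coefficient, which is `a1^p1 a2^p2`.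
-/

open Finset

/-- Stirling numbers of the second kind. -/
def stirling2 : ℕ → ℕ → ℕ
  | 0, 0 => 1
  | 0, _ + 1 => 0
  | _ + 1, 0 => 0
  | p + 1, k + 1 => stirling2 p k + (k + 1) * stirling2 p (k + 1)

/-- Unsigned Stirling numbers of the first kind. -/
def stirling1 : ℕ → ℕ → ℕ
  | 0, 0 => 1
  | 0, _ + 1 => 0
  | _ + 1, 0 => 0
  | p + 1, k + 1 => stirling1 p k + p * stirling1 p (k + 1)

/-- Stirling numbers of the second kind with integer second argument (0 when negative). -/
def stirling2Z (p : ℕ) (k : ℤ) : ℤ :=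
  if k < 0 then 0 else stirling2 p k.toNat

/-- Generalized Stirling number of the second kind
`S_{a1,b1}^{a2,b2,p2}(p1,k)`. -/
noncomputable def gsn (a1 b1 a2 b2 : ℂ) (p1 p2 k : ℕ) : ℂ :=
  (1 / (k.factorial : ℂ)) * ∑ j ∈ range (k + 1),
    (-1) ^ j * (k.choose j : ℂ) * (a1 * ((k : ℂ) - j) + b1) ^ p1 *
      (a2 * ((k : ℂ) - j) + b2) ^ p2

/-- Generalized Stirling number with integer index (0 when negative). -/
noncomputable def gsnZ (a1 b1 a2 b2 : ℂ) (p1 p2 : ℕ) (k : ℤ) : ℂ :=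
  if k < 0 then 0 else gsn a1 b1 a2 b2 p1 p2 k.toNat

open Polynomial fwdDiff

theorem Polynomial.fwdDiff_iter_eval_eq_factorial_mul_coeff {R : Type*} [CommRing R] {P : R[X]}
    {n : ℕ} (hP : P.natDegree ≤ n) (x : R) :
    (Δ_[1])^[n] P.eval x = n.factorial * P.coeff n := by
  rcases hP.lt_or_eq with hlt | rfl
  · rw [fwdDiff_iter_eq_zero_of_degree_lt hlt, coeff_eq_zero_of_natDegree_lt hlt, Pi.zero_apply,
      mul_zero]
  · rw [fwdDiff_iter_degree_eq_factorial, Pi.smul_apply, Pi.natCast_apply, smul_eq_mul, mul_comm,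
      leadingCoeff]

theorem sum_neg_one_pow_mul_choose_mul_sub_eq_fwdDiff_iter {R : Type*} [CommRing R] (f : R → R)
    (k : ℕ) :
    ∑ j ∈ range (k + 1), (-1) ^ j * (k.choose j : R) * f (k - j) = (Δ_[1])^[k] f 0 := by
  rw [fwdDiff_iter_eq_sum_shift, ← sum_range_reflect]
  refine sum_congr rfl fun j hj => ?_
  have hjk : j ≤ k := Nat.lt_succ_iff.mp (mem_range.mp hj)
  rw [add_tsub_cancel_right, Nat.choose_symm hjk, Nat.cast_sub hjk,
    sub_sub_cancel, zero_add, nsmul_one, zsmul_eq_mul]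
  push_cast
  ring

theorem Polynomial.natDegree_linear_pow_le {R : Type*} [Semiring R] (a b : R) (p : ℕ) :
    ((C a * X + C b) ^ p).natDegree ≤ p := by
  compute_degree

theorem Polynomial.coeff_linear_pow_self {R : Type*} [CommSemiring R] (a b : R) (p : ℕ) :
    ((C a * X + C b) ^ p).coeff p = a ^ p := by
  have h : (C a * X + C b).natDegree ≤ 1 := by compute_degree
  simpa using coeff_pow_of_natDegree_le (m := p) h

theorem stmt3 (a1 b1 a2 b2 : ℂ) (p1 p2 : ℕ) :
    gsn a1 b1 a2 b2 p1 p2 (p1 + p2) = a1 ^ p1 * a2 ^ p2 := by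
  set P : ℂ[X] := (C a1 * X + C b1) ^ p1 * (C a2 * X + C b2) ^ p2
  have hdeg : P.natDegree ≤ p1 + p2 :=
    natDegree_mul_le_of_le (natDegree_linear_pow_le a1 b1 p1) (natDegree_linear_pow_le a2 b2 p2)
  have hcoeff : P.coeff (p1 + p2) = a1 ^ p1 * a2 ^ p2 := by
    rw [coeff_mul_add_eq_of_natDegree_le (natDegree_linear_pow_le a1 b1 p1)
      (natDegree_linear_pow_le a2 b2 p2), coeff_linear_pow_self, coeff_linear_pow_self]
  have hsum := sum_neg_one_pow_mul_choose_mul_sub_eq_fwdDiff_iter P.eval (p1 + p2)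
  rw [fwdDiff_iter_eval_eq_factorial_mul_coeff hdeg, hcoeff] at hsum
  rw [gsn, one_div, inv_mul_eq_iff_eq_mul₀ (Nat.cast_ne_zero.mpr (Nat.factorial_ne_zero _)), ← hsum]
  simp only [P, eval_mul, eval_pow, eval_add, eval_C, eval_X, mul_assoc]
end

section
/- For complex numbers a1,b1,a2,b2,c1,d1,c2,d2 with c1,c2 nonzero, and nonnegative integers p1,p2,k: S_{a1,b1}^{a2,b2,p2}(p1,k) = c1^{-p1} c2^{-p2} Σ_{j1=0}^{p1} Σ_{j2=0}^{p2} C(p1,j1) C(p2,j2) a1^{j1} a2^{j2} (b1 c1 − a1 d1)^{p1−j1} (b2 c2 − a2 d2)^{p2−j2} S_{c1,d1}^{c2,d2,j2}(j1,k). -/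
open Finset

/-! Since `a x + b = c⁻¹ (a (c x + d) + (b c - a d))`, the binomial theorem writes
`(a₁x + b₁)^p₁ (a₂x + b₂)^p₂` as a combination of the products `(c₁x + d₁)^j₁ (c₂x + d₂)^j₂`.
Both sides of the identity are the same alternating sum `Σⱼ (-1)^j C(k,j) f(k - j) / k!`, which is
linear in the sampled function `f`, applied to the two sides of that expansion. -/

section AffineChange

variable {K : Type*} [Field K]

theorem affine_pow_eq_sum_pow (a b c d x : K) (hc : c ≠ 0) (p : ℕ) :
    (a * x + b) ^ p = c⁻¹ ^ p * ∑ j ∈ range (p + 1),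
      (p.choose j : K) * a ^ j * (b * c - a * d) ^ (p - j) * (c * x + d) ^ j := by
  have h : a * x + b = c⁻¹ * (a * (c * x + d) + (b * c - a * d)) := by
    field_simp
    ring
  rw [h, mul_pow, add_pow]
  congr 1
  refine sum_congr rfl fun j _ => ?_
  rw [mul_pow]
  ring

theorem affine_pow_mul_affine_pow_eq_sum (a1 b1 a2 b2 c1 d1 c2 d2 x : K) (hc1 : c1 ≠ 0)
    (hc2 : c2 ≠ 0) (p1 p2 : ℕ) :
    (a1 * x + b1) ^ p1 * (a2 * x + b2) ^ p2 =
      c1⁻¹ ^ p1 * c2⁻¹ ^ p2 * ∑ j1 ∈ range (p1 + 1), ∑ j2 ∈ range (p2 + 1),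
        (p1.choose j1 : K) * (p2.choose j2 : K) * a1 ^ j1 * a2 ^ j2 *
          (b1 * c1 - a1 * d1) ^ (p1 - j1) * (b2 * c2 - a2 * d2) ^ (p2 - j2) *
          ((c1 * x + d1) ^ j1 * (c2 * x + d2) ^ j2) := by
  rw [affine_pow_eq_sum_pow a1 b1 c1 d1 x hc1, affine_pow_eq_sum_pow a2 b2 c2 d2 x hc2,
    mul_mul_mul_comm, sum_mul_sum]
  congr 1
  refine sum_congr rfl fun j1 _ => sum_congr rfl fun j2 _ => ?_
  ring

end AffineChange

theorem stmt4 (a1 b1 a2 b2 c1 d1 c2 d2 : ℂ) (hc1 : c1 ≠ 0) (hc2 : c2 ≠ 0)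
    (p1 p2 k : ℕ) :
    gsn a1 b1 a2 b2 p1 p2 k =
      c1⁻¹ ^ p1 * c2⁻¹ ^ p2 * ∑ j1 ∈ range (p1 + 1), ∑ j2 ∈ range (p2 + 1),
        (p1.choose j1 : ℂ) * (p2.choose j2 : ℂ) * a1 ^ j1 * a2 ^ j2 *
          (b1 * c1 - a1 * d1) ^ (p1 - j1) * (b2 * c2 - a2 * d2) ^ (p2 - j2) *
          gsn c1 d1 c2 d2 j1 j2 k := by
  -- reassociate each summand of `gsn` so that the sampled product is a single factor
  simp only [gsn, mul_assoc _ ((a1 * _ + b1) ^ p1),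
    affine_pow_mul_affine_pow_eq_sum a1 b1 a2 b2 c1 d1 c2 d2 _ hc1 hc2, mul_sum]
  rw [sum_comm]
  refine sum_congr rfl fun j1 _ => ?_
  rw [sum_comm]
  refine sum_congr rfl fun j2 _ => sum_congr rfl fun j _ => ?_
  ring
end

section
/- For complex numbers a1,b1,a2,b2 and nonnegative integers p1,p2,k: S_{a1,b1}^{a2,b2,p2}(p1,k) = Σ_{j1=0}^{p1} Σ_{j2=0}^{p2} C(p1,j1) C(p2,j2) a1^{j1} a2^{j2} b1^{p1−j1} b2^{p2−j2} S(j1+j2, k), where S(·,·) are the standard Stirling numbers of the second kind. -/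
/-!
The alternating sum `∑ j, (-1)^j C(k,j) (k-j)^n` is the `k`-th forward difference of `r ↦ r^n`
at `0`. Absorbing the factor `i` of `i^(n+1)` into `C(k+1,i)` gives
`Δ^(k+1) r^(n+1) (0) = (k+1) Δ^k r^n (1) = (k+1) (Δ^k r^n (0) + Δ^(k+1) r^n (0))`,
which is the recurrence of `k! S(n,k)`. Expanding both binomial powers in the generalized
number reduces it to a linear combination of these alternating sums.
-/

open Finset

open fwdDiff
open scoped Nat

theorem fwdDiff_iter_succ_apply {M G : Type*} [AddCommMonoid M] [AddCommGroup G] (h : M)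
    (f : M → G) (k : ℕ) (y : M) :
    (Δ_[h])^[k + 1] f y = (Δ_[h])^[k] f (y + h) - (Δ_[h])^[k] f y := by
  rw [Function.iterate_succ_apply', fwdDiff]

section

variable {R : Type*} [CommRing R]

theorem fwdDiff_iter_pow_succ_apply_zero (n k : ℕ) :
    (Δ_[1])^[k + 1] (fun r : R ↦ r ^ (n + 1)) 0 =
      (k + 1) * (Δ_[1])^[k] (fun r : R ↦ r ^ n) 1 := by
  rw [fwdDiff_iter_eq_sum_shift, fwdDiff_iter_eq_sum_shift, sum_range_succ', mul_sum]
  simp only [zero_add, nsmul_one, zsmul_eq_mul, Nat.cast_zero, ne_eq, Nat.add_one_ne_zero,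
    not_false_eq_true, zero_pow, mul_zero, add_zero, Nat.add_sub_add_right]
  refine sum_congr rfl fun i _ ↦ ?_
  have absorb : ((i : R) + 1) * (k + 1).choose (i + 1) = (k + 1) * k.choose i := by
    exact_mod_cast congrArg (Nat.cast : ℕ → R)
      ((mul_comm _ _).trans (Nat.add_one_mul_choose_eq k i).symm)
  push_cast
  linear_combination ((-1 : R) ^ (k - i) * ((i : R) + 1) ^ n) * absorb

theorem fwdDiff_iter_pow_apply_zero (n k : ℕ) :
    (Δ_[1])^[k] (fun r : R ↦ r ^ n) 0 = k ! * stirling2 n k := by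
  induction n generalizing k with
  | zero =>
    cases k with
    | zero => simp [stirling2]
    | succ k => rw [fwdDiff_iter_pow_eq_zero_of_lt k.succ_pos]; simp [stirling2]
  | succ n ih =>
    cases k with
    | zero => simp [stirling2]
    | succ k =>
      have shift := fwdDiff_iter_succ_apply 1 (fun r : R ↦ r ^ n) k 0
      rw [zero_add] at shift
      rw [fwdDiff_iter_pow_succ_apply_zero, eq_add_of_sub_eq shift.symm, ih, ih, stirling2,
        Nat.factorial_succ]
      push_cast
      ring

theorem alternating_sum_choose_mul_sub_pow (n k : ℕ) :
    ∑ j ∈ range (k + 1), (-1) ^ j * (k.choose j : R) * ((k : R) - j) ^ n =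
      k ! * stirling2 n k := by
  rw [← fwdDiff_iter_pow_apply_zero, fwdDiff_iter_eq_sum_shift, ← sum_range_reflect _ (k + 1)]
  refine sum_congr rfl fun j hj ↦ ?_
  have hjk : j ≤ k := Nat.lt_succ_iff.mp (mem_range.mp hj)
  rw [add_tsub_cancel_right, Nat.choose_symm hjk, Nat.cast_sub hjk, zero_add, nsmul_one,
    zsmul_eq_mul]
  push_cast
  ring

theorem mul_add_pow_mul_mul_add_pow (a1 b1 a2 b2 x : R) (p1 p2 : ℕ) :
    (a1 * x + b1) ^ p1 * (a2 * x + b2) ^ p2 =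
      ∑ j1 ∈ range (p1 + 1), ∑ j2 ∈ range (p2 + 1),
        (p1.choose j1 : R) * p2.choose j2 * a1 ^ j1 * a2 ^ j2 * b1 ^ (p1 - j1) * b2 ^ (p2 - j2) *
          x ^ (j1 + j2) := by
  rw [add_pow, add_pow, sum_mul_sum]
  refine sum_congr rfl fun j1 _ ↦ sum_congr rfl fun j2 _ ↦ ?_
  ring

end

theorem stmt5 (a1 b1 a2 b2 : ℂ) (p1 p2 k : ℕ) :
    gsn a1 b1 a2 b2 p1 p2 k =
      ∑ j1 ∈ range (p1 + 1), ∑ j2 ∈ range (p2 + 1),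
        (p1.choose j1 : ℂ) * (p2.choose j2 : ℂ) * a1 ^ j1 * a2 ^ j2 *
          b1 ^ (p1 - j1) * b2 ^ (p2 - j2) * (stirling2 (j1 + j2) k : ℂ) := by
  have expand (j : ℕ) :
      (-1) ^ j * (k.choose j : ℂ) * (a1 * ((k : ℂ) - j) + b1) ^ p1 *
          (a2 * ((k : ℂ) - j) + b2) ^ p2 =
        ∑ j1 ∈ range (p1 + 1), ∑ j2 ∈ range (p2 + 1),
          (p1.choose j1 : ℂ) * p2.choose j2 * a1 ^ j1 * a2 ^ j2 * b1 ^ (p1 - j1) *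
            b2 ^ (p2 - j2) * ((-1) ^ j * k.choose j * ((k : ℂ) - j) ^ (j1 + j2)) := by
    rw [mul_assoc, mul_add_pow_mul_mul_add_pow, mul_sum]
    refine sum_congr rfl fun j1 _ ↦ ?_
    rw [mul_sum]
    refine sum_congr rfl fun j2 _ ↦ ?_
    ring
  have hk : (k ! : ℂ) ≠ 0 := mod_cast k.factorial_ne_zero
  simp_rw [gsn, expand]
  rw [sum_comm, mul_sum]
  refine sum_congr rfl fun j1 _ ↦ ?_
  rw [sum_comm, mul_sum]
  refine sum_congr rfl fun j2 _ ↦ ?_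
  rw [← mul_sum, alternating_sum_choose_mul_sub_pow]
  field_simp
end

section
/- For complex a1,b1,a2,b2 and nonnegative integers p1,p2,k: S_{a1,a1+b1}^{a2,a2+b2,p2}(p1,k) = S_{a1,b1}^{a2,b2,p2}(p1,k) + (k+1) · S_{a1,b1}^{a2,b2,p2}(p1,k+1). -/
open Finset

/-!
Up to the factor `1 / k!`, the sum defining `gsn a1 b1 a2 b2 p1 p2 k` is the `k`-th forward
difference at `0` of `F y = (a1 y + b1) ^ p1 (a2 y + b2) ^ p2`, and replacing `b1, b2` by
`a1 + b1, a2 + b2` evaluates it at `1` instead. The identity is then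
`Δ^[k+1] F 0 = Δ^[k] F 1 - Δ^[k] F 0`, divided by `k!`.
-/

open fwdDiff

theorem sum_range_alternating_choose_eq_fwdDiff_iter {R : Type*} [CommRing R] (F : R → R)
    (k : ℕ) (x : R) :
    ∑ j ∈ range (k + 1), (-1) ^ j * (k.choose j : R) * F (x + ((k : R) - j)) =
      (Δ_[1])^[k] F x := by
  rw [fwdDiff_iter_eq_sum_shift, ← sum_range_reflect]
  refine sum_congr rfl fun j hj => ?_
  have hjk : j ≤ k := Nat.lt_succ_iff.mp (mem_range.mp hj)
  rw [Nat.add_sub_cancel, Nat.choose_symm hjk, Nat.cast_sub hjk, sub_sub_cancel,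
    nsmul_one, zsmul_eq_mul]
  push_cast
  ring

theorem gsn_eq_fwdDiff_iter (a1 b1 a2 b2 x : ℂ) (p1 p2 k : ℕ) :
    gsn a1 (a1 * x + b1) a2 (a2 * x + b2) p1 p2 k =
      (k.factorial : ℂ)⁻¹ * (Δ_[1])^[k] (fun y => (a1 * y + b1) ^ p1 * (a2 * y + b2) ^ p2) x := by
  rw [gsn, ← sum_range_alternating_choose_eq_fwdDiff_iter, one_div]
  congr 1
  refine sum_congr rfl fun j _ => ?_
  ring

theorem stmt9 (a1 b1 a2 b2 : ℂ) (p1 p2 k : ℕ) :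
    gsn a1 (a1 + b1) a2 (a2 + b2) p1 p2 k =
      gsn a1 b1 a2 b2 p1 p2 k + ((k : ℂ) + 1) * gsn a1 b1 a2 b2 p1 p2 (k + 1) := by
  set F : ℂ → ℂ := fun y => (a1 * y + b1) ^ p1 * (a2 * y + b2) ^ p2
  have at_zero (n : ℕ) : gsn a1 b1 a2 b2 p1 p2 n = (n.factorial : ℂ)⁻¹ * (Δ_[1])^[n] F 0 := by
    simpa using gsn_eq_fwdDiff_iter a1 b1 a2 b2 0 p1 p2 n
  have at_one :
      gsn a1 (a1 + b1) a2 (a2 + b2) p1 p2 k = (k.factorial : ℂ)⁻¹ * (Δ_[1])^[k] F 1 := by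
    simpa using gsn_eq_fwdDiff_iter a1 b1 a2 b2 1 p1 p2 k
  have step : (Δ_[1])^[k + 1] F 0 = (Δ_[1])^[k] F 1 - (Δ_[1])^[k] F 0 := by
    rw [Function.iterate_succ_apply', fwdDiff, zero_add]
  rw [at_one, at_zero, at_zero, step, Nat.factorial_succ]
  have hk : (k.factorial : ℂ) ≠ 0 := Nat.cast_ne_zero.2 k.factorial_ne_zero
  push_cast
  field_simp
  ring
end

section
/- For nonnegative integers p, k and any positive integer m: Σ_{j=0}^{p} C(p,j) m^{p−j} S(j,k) = Σ_{t=0}^{m−1} (−1)^t s(m, m−t) S(p+m−t, k+m), where s are the unsigned Stirling numbers of the first kind and S the Stirling numbers of the second kind. -/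
/-!
Both sides become alternating binomial sums through Euler's formula
`k! S(n,k) = ∑ᵢ (-1)^i C(k,i) (k-i)^n`. On the left the binomial theorem collapses the sum over
`j` to `∑ᵢ (-1)^i C(k,i) (k-i+m)^p = k! S_{1,m}(p,k)`. On the right the signed Stirling numbers of
the first kind assemble the falling factorial `x(x-1)⋯(x-m+1)` at `x = k+m-i`; it vanishes for
`i > k` and otherwise turns `C(k+m,i)` into `(k+m)!/k! · C(k,i)`.
-/

open Finset

open scoped Nat

theorem stirling1_eq_zero_of_lt : ∀ {m j : ℕ}, m < j → stirling1 m j = 0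
  | 0, _ + 1, _ => rfl
  | m + 1, j + 1, h => by
    rw [stirling1, stirling1_eq_zero_of_lt (by omega), stirling1_eq_zero_of_lt (by omega), mul_zero,
      add_zero]

theorem sum_stirling1_mul_pow_eq_ascPochhammer_eval {S : Type*} [CommSemiring S] (m : ℕ)
    (x : S) :
    ∑ j ∈ range (m + 1), (stirling1 m j : S) * x ^ j = (ascPochhammer S m).eval x := by
  induction m with
  | zero => simp [stirling1]
  | succ m ih =>
    have hshift : (m : S) * ∑ j ∈ range (m + 1), (stirling1 m (j + 1) : S) * x ^ (j + 1) =
        m * ∑ j ∈ range (m + 1), (stirling1 m j : S) * x ^ j := by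
      cases m with
      | zero => simp
      | succ m =>
        rw [sum_range_succ, stirling1_eq_zero_of_lt (by omega), sum_range_succ' _ (m + 1)]
        simp [stirling1]
    rw [sum_range_succ', ascPochhammer_succ_eval, ← ih, mul_add, mul_comm _ (m : S), ← hshift,
      sum_mul, mul_sum, ← sum_add_distrib]
    simp only [stirling1, Nat.cast_add, Nat.cast_mul, Nat.cast_zero, zero_mul, add_zero]
    exact sum_congr rfl fun j _ => by ring

theorem choose_add_mul_descFactorial (k m i : ℕ) (hi : i ≤ k) :
    (k + m).choose i * (k + m - i).descFactorial m = (k + m).descFactorial m * k.choose i := by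
  refine Nat.eq_of_mul_eq_mul_right (show 0 < i ! * (k - i)! by positivity) ?_
  calc (k + m).choose i * (k + m - i).descFactorial m * (i ! * (k - i)!)
      = (k + m).choose i * i ! * ((k + m - i - m)! * (k + m - i).descFactorial m) := by
        rw [show k + m - i - m = k - i by omega]; ring
    _ = (k + m - m)! * (k + m).descFactorial m := by
        rw [Nat.factorial_mul_descFactorial (by omega),
          Nat.choose_mul_factorial_mul_factorial (by omega),
          Nat.factorial_mul_descFactorial (by omega)]
    _ = (k + m).descFactorial m * k.choose i * (i ! * (k - i)!) := by
        rw [Nat.add_sub_cancel, ← Nat.choose_mul_factorial_mul_factorial hi]; ring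

section

variable {R : Type*} [CommRing R]

theorem sum_range_neg_one_pow_mul_choose_succ_mul (f : ℕ → R) (k : ℕ) :
    ∑ i ∈ range (k + 2), (-1) ^ i * ((k + 1).choose i : R) * f i =
      ∑ i ∈ range (k + 1), (-1) ^ i * (k.choose i : R) * (f i - f (i + 1)) := by
  have hshift : ∑ i ∈ range (k + 1), (-1) ^ i * (k.choose i : R) * f i =
      f 0 - ∑ i ∈ range (k + 1), (-1) ^ i * (k.choose (i + 1) : R) * f (i + 1) := by
    rw [sum_range_succ', sum_range_succ (fun i => (-1) ^ i * (k.choose (i + 1) : R) * f (i + 1)),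
      Nat.choose_succ_self, Nat.cast_zero, mul_zero, zero_mul, add_zero, sub_eq_add_neg,
      ← sum_neg_distrib, add_comm]
    simp only [pow_zero, Nat.choose_zero_right, Nat.cast_one, one_mul, pow_succ]
    congr 1
    exact sum_congr rfl fun i _ => by ring
  simp only [mul_sub, sum_sub_distrib, hshift]
  rw [sum_range_succ', sub_sub, ← sum_add_distrib, sub_eq_add_neg, ← sum_neg_distrib, add_comm]
  simp only [pow_zero, Nat.choose_zero_right, Nat.cast_one, one_mul]
  congr 1
  exact sum_congr rfl fun i _ => by push_cast [Nat.choose_succ_succ]; ring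

theorem cast_choose_succ_mul_sub (k i : ℕ) (hi : i ≤ k + 1) :
    ((k + 1).choose i : R) * (((k + 1 : ℕ) : R) - i) = ((k + 1 : ℕ) : R) * k.choose i := by
  have h := congrArg (Nat.cast : ℕ → R) (Nat.choose_mul_succ_eq k i)
  push_cast [Nat.cast_sub hi] at h ⊢
  linear_combination -h

theorem factorial_mul_stirling2_eq_sum (n k : ℕ) :
    (k ! : R) * stirling2 n k =
      ∑ i ∈ range (k + 1), (-1) ^ i * (k.choose i : R) * ((k : R) - i) ^ n := by
  induction n generalizing k with
  | zero =>
    cases k with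
    | zero => simp [stirling2]
    | succ k =>
      simpa [stirling2] using (sum_range_neg_one_pow_mul_choose_succ_mul (fun _ => (1 : R)) k).symm
  | succ n ih =>
    cases k with
    | zero => simp [stirling2]
    | succ k =>
      have hrec : ((k + 1)! : R) * stirling2 (n + 1) (k + 1) =
          ((k + 1 : ℕ) : R) *
            ((k ! : R) * stirling2 n k + ((k + 1)! : R) * stirling2 n (k + 1)) := by
        rw [stirling2]; push_cast [Nat.factorial_succ]; ring
      have hpow : ∑ i ∈ range (k + 2),
            (-1) ^ i * ((k + 1).choose i : R) * ((k + 1 : ℕ) - i) ^ (n + 1) =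
          ((k + 1 : ℕ) : R) *
            ∑ i ∈ range (k + 1), (-1) ^ i * (k.choose i : R) * ((k + 1 : ℕ) - i) ^ n := by
        rw [sum_range_succ, mul_sum]
        simp only [sub_self, zero_pow n.succ_ne_zero, mul_zero, add_zero]
        refine sum_congr rfl fun i hi => ?_
        linear_combination (-1) ^ i * (((k + 1 : ℕ) : R) - i) ^ n *
          cast_choose_succ_mul_sub (R := R) k i (by grind)
      rw [hrec, ih, ih, hpow, sum_range_neg_one_pow_mul_choose_succ_mul, ← sum_add_distrib]
      congr 1
      refine sum_congr rfl fun i _ => ?_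
      push_cast
      ring

theorem factorial_mul_sum_choose_mul_pow_mul_stirling2 (p k m : ℕ) :
    (k ! : R) * ∑ j ∈ range (p + 1), (p.choose j : R) * (m : R) ^ (p - j) * stirling2 j k =
      ∑ i ∈ range (k + 1), (-1) ^ i * (k.choose i : R) * ((k : R) - i + m) ^ p := by
  calc (k ! : R) * ∑ j ∈ range (p + 1), (p.choose j : R) * (m : R) ^ (p - j) * stirling2 j k
      = ∑ j ∈ range (p + 1), ∑ i ∈ range (k + 1),
          (p.choose j : R) * (m : R) ^ (p - j) *
            ((-1) ^ i * (k.choose i : R) * ((k : R) - i) ^ j) := by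
        rw [mul_sum]
        refine sum_congr rfl fun j _ => ?_
        rw [← mul_sum, ← factorial_mul_stirling2_eq_sum]
        ring
    _ = ∑ i ∈ range (k + 1), (-1) ^ i * (k.choose i : R) *
          ∑ j ∈ range (p + 1), ((k : R) - i) ^ j * (m : R) ^ (p - j) * p.choose j := by
        rw [sum_comm]
        simp only [mul_sum]
        exact sum_congr rfl fun i _ => sum_congr rfl fun j _ => by ring
    _ = _ := by simp only [add_pow]

theorem sum_neg_one_pow_mul_stirling1_mul_pow_eq_descPochhammer_eval {m : ℕ} (hm : 0 < m)
    (x : R) :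
    ∑ t ∈ range m, (-1) ^ t * (stirling1 m (m - t) : R) * x ^ (m - t) =
      (descPochhammer R m).eval x := by
  have hzero : stirling1 m 0 = 0 := by
    obtain ⟨n, rfl⟩ := Nat.exists_eq_succ_of_ne_zero hm.ne'
    rfl
  have hsign : ∀ t ∈ range (m + 1), (-1 : R) ^ m * (-1) ^ (m - t) = (-1) ^ t := fun t ht => by
    rw [← pow_add, show m + (m - t) = 2 * (m - t) + t by grind, pow_add, pow_mul, neg_one_sq,
      one_pow, one_mul]
  calc ∑ t ∈ range m, (-1) ^ t * (stirling1 m (m - t) : R) * x ^ (m - t)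
      = ∑ t ∈ range (m + 1), (-1) ^ m * ((stirling1 m (m - t) : R) * (-x) ^ (m - t)) := by
        rw [sum_range_succ, Nat.sub_self, hzero, Nat.cast_zero, zero_mul, mul_zero, add_zero]
        refine sum_congr rfl fun t ht => ?_
        rw [neg_pow, ← hsign t (by grind)]
        ring
    _ = (-1) ^ m * ∑ j ∈ range (m + 1), (stirling1 m j : R) * (-x) ^ j := by
        rw [mul_sum, ← sum_range_reflect]
        refine sum_congr rfl fun j hj => ?_
        rw [add_tsub_cancel_right, Nat.sub_sub_self (mem_range_succ_iff.1 hj)]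
    _ = (descPochhammer R m).eval x := by
        rw [sum_stirling1_mul_pow_eq_ascPochhammer_eval, ascPochhammer_eval_neg_eq_descPochhammer,
          ← mul_assoc, ← mul_pow, neg_one_mul, neg_neg, one_pow, one_mul]

theorem factorial_mul_sum_stirling1_mul_stirling2 (p k : ℕ) {m : ℕ} (hm : 0 < m) :
    ((k + m)! : R) * ∑ t ∈ range m, (-1) ^ t * (stirling1 m (m - t) : R) *
        stirling2 (p + m - t) (k + m) =
      (k + m).descFactorial m *
        ∑ i ∈ range (k + 1), (-1) ^ i * (k.choose i : R) * ((k : R) - i + m) ^ p := by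
  have hsub : ∀ i ≤ k + m, ((k + m : ℕ) : R) - i = ((k + m - i : ℕ) : R) := fun i hi => by
    rw [Nat.cast_sub hi]
  calc ((k + m)! : R) * ∑ t ∈ range m, (-1) ^ t * (stirling1 m (m - t) : R) *
          stirling2 (p + m - t) (k + m)
      = ∑ t ∈ range m, ∑ i ∈ range (k + m + 1), (-1) ^ t * (stirling1 m (m - t) : R) *
          ((-1) ^ i * ((k + m).choose i : R) * (((k + m : ℕ) : R) - i) ^ (p + m - t)) := by
        rw [mul_sum]
        refine sum_congr rfl fun t _ => ?_
        rw [← mul_sum, ← factorial_mul_stirling2_eq_sum]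
        ring
    _ = ∑ i ∈ range (k + m + 1), (-1) ^ i * ((k + m).choose i : R) *
          (((k + m : ℕ) : R) - i) ^ p * ∑ t ∈ range m,
            (-1) ^ t * (stirling1 m (m - t) : R) * (((k + m : ℕ) : R) - i) ^ (m - t) := by
        rw [sum_comm]
        refine sum_congr rfl fun i _ => ?_
        rw [mul_sum]
        refine sum_congr rfl fun t ht => ?_
        rw [show p + m - t = p + (m - t) by grind, pow_add]
        ring
    _ = ∑ i ∈ range (k + m + 1), (-1) ^ i * ((k + m).choose i : R) *
          (((k + m : ℕ) : R) - i) ^ p * (descPochhammer R m).eval (((k + m : ℕ) : R) - i) := by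
        simp only [sum_neg_one_pow_mul_stirling1_mul_pow_eq_descPochhammer_eval hm]
    _ = ∑ i ∈ range (k + 1), (-1) ^ i * ((k + m).choose i : R) *
          (((k + m : ℕ) : R) - i) ^ p * (descPochhammer R m).eval (((k + m : ℕ) : R) - i) := by
        refine (sum_subset (range_subset_range.2 (by omega)) fun i hi hik => ?_).symm
        rw [hsub i (by grind), descPochhammer_eval_coe_nat_of_lt (by grind), mul_zero]
    _ = _ := by
        rw [mul_sum]
        refine sum_congr rfl fun i hi => ?_
        have hik : i ≤ k := mem_range_succ_iff.1 hi
        have hchoose := congrArg (Nat.cast : ℕ → R) (choose_add_mul_descFactorial k m i hik)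
        push_cast at hchoose
        have hshift : ((k + m - i : ℕ) : R) = k - i + m := by
          push_cast [Nat.cast_sub (show i ≤ k + m by omega)]; ring
        rw [hsub i (by omega), descPochhammer_eval_eq_descFactorial, hshift]
        linear_combination (-1) ^ i * ((k : R) - i + m) ^ p * hchoose

end

theorem stmt11 (p k m : ℕ) (hm : 0 < m) :
    (∑ j ∈ range (p + 1), (p.choose j : ℤ) * (m : ℤ) ^ (p - j) * stirling2 j k) =
      ∑ t ∈ range m,
        (-1 : ℤ) ^ t * (stirling1 m (m - t) : ℤ) * (stirling2 (p + m - t) (k + m) : ℤ) := by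
  have hfac : ((k + m).descFactorial m * k ! : ℤ) = (k + m)! := by
    have h := Nat.factorial_mul_descFactorial (Nat.le_add_left m k)
    rw [Nat.add_sub_cancel] at h
    exact_mod_cast (mul_comm _ _).trans h
  refine mul_left_cancel₀ (show ((k + m)! * k ! : ℤ) ≠ 0 by positivity) ?_
  calc ((k + m)! * k ! : ℤ) *
        ∑ j ∈ range (p + 1), (p.choose j : ℤ) * (m : ℤ) ^ (p - j) * stirling2 j k
      = (k + m)! * ∑ i ∈ range (k + 1), (-1) ^ i * (k.choose i : ℤ) * ((k : ℤ) - i + m) ^ p := by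
        rw [mul_assoc, factorial_mul_sum_choose_mul_pow_mul_stirling2]
    _ = k ! * ((k + m)! * ∑ t ∈ range m,
          (-1 : ℤ) ^ t * (stirling1 m (m - t) : ℤ) * (stirling2 (p + m - t) (k + m) : ℤ)) := by
        rw [factorial_mul_sum_stirling1_mul_stirling2 p k hm, ← hfac]
        ring
    _ = _ := by ring
end

section
/- For all nonnegative integers p and k: S(p+3, k+3) − 3·S(p+2, k+3) + 2·S(p+1, k+3) = Σ_{j=0}^{p} C(p,j) 3^{p−j} S(j,k), where S denotes the Stirling numbers of the second kind. -/
/-! Both sides satisfy the recurrence of Broder's `3`-Stirling numbers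
`a (p+1) (k+1) = a p k + (k+4) a p (k+1)` with the same boundary values. For the left side this
is the Stirling recurrence read off termwise, together with `S(n+1,2) = 2^n - 1` on the column
`k = 0`; for the binomial transform it follows from Pascal's rule. -/

open Finset

theorem stirling2_succ_succ (n k : ℕ) :
    stirling2 (n + 1) (k + 1) = stirling2 n k + (k + 1) * stirling2 n (k + 1) := rfl

theorem stirling2_succ_succ_intCast (n k : ℕ) :
    (stirling2 (n + 1) (k + 1) : ℤ) = stirling2 n k + (k + 1) * stirling2 n (k + 1) := by
  rw [stirling2_succ_succ]
  push_cast
  rfl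

theorem stirling2_eq_stirlingSecond : stirling2 = Nat.stirlingSecond := by
  funext n k
  induction n generalizing k with
  | zero => cases k <;> rfl
  | succ n ih =>
    cases k with
    | zero => rfl
    | succ k => rw [stirling2_succ_succ, Nat.stirlingSecond_succ_succ, ih, ih, add_comm]

theorem stirling2_eq_zero_of_lt {n k : ℕ} (h : n < k) : stirling2 n k = 0 := by
  rw [stirling2_eq_stirlingSecond]
  exact Nat.stirlingSecond_eq_zero_of_lt h

theorem stirling2_succ_two (n : ℕ) : (stirling2 (n + 1) 2 : ℤ) = 2 ^ n - 1 := by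
  induction n with
  | zero => rfl
  | succ n ih =>
    rw [stirling2_succ_succ, stirling2_eq_stirlingSecond, Nat.stirlingSecond_one_right,
      ← stirling2_eq_stirlingSecond]
    push_cast
    rw [ih, pow_succ]
    ring

/-- `rStirling2 r p k` is the `r`-Stirling number `S_r(p + r, k + r)`: the number of partitions
of `p + r` elements into `k + r` blocks in which the first `r` elements lie in distinct blocks. -/
def rStirling2 (r : ℕ) : ℕ → ℕ → ℕ
  | p, 0 => r ^ p
  | 0, _ + 1 => 0
  | p + 1, k + 1 => rStirling2 r p k + (k + 1 + r) * rStirling2 r p (k + 1)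

theorem sum_choose_mul_pow_mul_stirling2 (r p k : ℕ) :
    ∑ j ∈ range (p + 1), p.choose j * r ^ (p - j) * stirling2 j k = rStirling2 r p k := by
  induction p generalizing k with
  | zero => cases k <;> rfl
  | succ p ih =>
    cases k with
    | zero =>
      rw [sum_range_succ']
      simp [stirling2, rStirling2]
    | succ k =>
      have pascal := sum_choose_succ_mul (fun i j ↦ r ^ j * stirling2 i (k + 1)) p
      simp only [Nat.cast_id, ← mul_assoc] at pascal
      refine pascal.trans ?_
      have h1 : ∑ i ∈ range (p + 1), p.choose i * r ^ (p + 1 - i) * stirling2 i (k + 1) =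
          r * rStirling2 r p (k + 1) := by
        rw [← ih, mul_sum]
        refine sum_congr rfl fun i hi ↦ ?_
        rw [Nat.sub_add_comm (Nat.lt_succ_iff.mp (mem_range.mp hi)), pow_succ]
        ring
      have h2 : ∑ i ∈ range (p + 1), p.choose i * r ^ (p - i) * stirling2 (i + 1) (k + 1) =
          rStirling2 r p k + (k + 1) * rStirling2 r p (k + 1) := by
        simp only [← ih, stirling2_succ_succ, mul_add, sum_add_distrib, mul_sum]
        congr 1
        exact sum_congr rfl fun i _ ↦ by ring
      rw [h1, h2, rStirling2]
      ring

theorem stirling2_diff_eq_rStirling2_three (p k : ℕ) :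
    (stirling2 (p + 3) (k + 3) : ℤ) - 3 * stirling2 (p + 2) (k + 3) +
        2 * stirling2 (p + 1) (k + 3) = rStirling2 3 p k := by
  induction p generalizing k with
  | zero =>
    cases k with
    | zero => rfl
    | succ k =>
      simp [stirling2_eq_zero_of_lt, rStirling2]
  | succ p ih =>
    cases k with
    | zero =>
      have ih0 := ih 0
      simp only [rStirling2, Nat.cast_pow] at ih0 ⊢
      linear_combination stirling2_succ_succ_intCast (p + 3) 2 -
        3 * stirling2_succ_succ_intCast (p + 2) 2 + 2 * stirling2_succ_succ_intCast (p + 1) 2 +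
        stirling2_succ_two (p + 2) - 3 * stirling2_succ_two (p + 1) + 2 * stirling2_succ_two p +
        3 * ih0
    | succ k =>
      rw [rStirling2]
      linear_combination (norm := (push_cast; ring)) stirling2_succ_succ_intCast (p + 3) (k + 3) -
        3 * stirling2_succ_succ_intCast (p + 2) (k + 3) +
        2 * stirling2_succ_succ_intCast (p + 1) (k + 3) + ih k + ((k : ℤ) + 4) * ih (k + 1)

theorem stmt12 (p k : ℕ) :
    (stirling2 (p + 3) (k + 3) : ℤ) - 3 * stirling2 (p + 2) (k + 3) +
        2 * stirling2 (p + 1) (k + 3) =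
      ∑ j ∈ range (p + 1), (p.choose j : ℤ) * 3 ^ (p - j) * stirling2 j k := by
  rw [stirling2_diff_eq_rStirling2_three, ← sum_choose_mul_pow_mul_stirling2]
  push_cast
  rfl
end

section
/- For complex a1,b1,a2,b2 and nonnegative integers p1,p2,q1,q2,l: S_{a1,b1}^{a2,b2,q1+q2}(p1+p2, l) = Σ_{m=0}^{p2+q2} S_{a1,b1}^{a2,b2,q2}(p2, m) · S_{a1, a1·m+b1}^{a2, a2·m+b2, q1}(p1, l−m), with the convention that generalized Stirling numbers with negative second argument are 0. -/
/-!
`k! · S_{a1,b1}^{a2,b2,q}(p,k)` is the `k`-th forward difference at `0` of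
`F_{p,q}(x) = (a1 x + b1)^p (a2 x + b2)^q`, and replacing each `b_i` by `a_i m + b_i` evaluates
that difference at `m` instead. Since `F_{p1+p2,q1+q2} = F_{p2,q2} F_{p1,q1}`, the identity is the
Leibniz rule for forward differences; the sum over `m` may stop at `p2 + q2` because `F_{p2,q2}`
is a polynomial of degree at most `p2 + q2`, and it may run past `l` because the terms with
negative second index are zero.
-/

open Finset

open fwdDiff Function Polynomial

theorem fwdDiff_iter_mul {M R : Type*} [AddCommMonoid M] [CommRing R] (h : M) (f g : M → R)
    (n : ℕ) (y : M) :
    (Δ_[h])^[n] (f * g) y = ∑ ij ∈ antidiagonal n,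
      (n.choose ij.1 : R) * ((Δ_[h])^[ij.1] f y * (Δ_[h])^[ij.2] g (y + ij.1 • h)) := by
  induction n generalizing f g with
  | zero => simp
  | succ n ih =>
    have product_rule : Δ_[h] (f * g) = f * Δ_[h] g + Δ_[h] f * fun x ↦ g (x + h) := by
      ext x
      simp only [fwdDiff, Pi.add_apply, Pi.mul_apply]
      ring
    rw [iterate_succ_apply, product_rule, fwdDiff_iter_add, Pi.add_apply, ih, ih,
      sum_antidiagonal_choose_succ_mul
        (fun i j ↦ (Δ_[h])^[i] f y * (Δ_[h])^[j] g (y + i • h)) n]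
    -- the first sums agree definitionally, as `Δ^[j] (Δ g) = Δ^[j + 1] g`
    congr 1
    refine sum_congr rfl fun ij hij ↦ ?_
    rw [Nat.choose_symm_of_eq_add (mem_antidiagonal.1 hij).symm, ← iterate_succ_apply,
      fwdDiff_iter_comp_add, succ_nsmul, add_assoc]

def gsnFun (a1 b1 a2 b2 : ℂ) (p q : ℕ) (x : ℂ) : ℂ :=
  (a1 * x + b1) ^ p * (a2 * x + b2) ^ q

theorem gsnFun_add (a1 b1 a2 b2 : ℂ) (p1 p2 q1 q2 : ℕ) :
    gsnFun a1 b1 a2 b2 (p1 + p2) (q1 + q2) =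
      gsnFun a1 b1 a2 b2 p2 q2 * gsnFun a1 b1 a2 b2 p1 q1 := by
  ext x
  simp only [gsnFun, Pi.mul_apply]
  ring

theorem gsn_shift_eq_fwdDiff_iter (a1 b1 a2 b2 c : ℂ) (p q k : ℕ) :
    gsn a1 (a1 * c + b1) a2 (a2 * c + b2) p q k =
      1 / (k.factorial : ℂ) * (Δ_[1])^[k] (gsnFun a1 b1 a2 b2 p q) c := by
  rw [gsn, fwdDiff_iter_eq_sum_shift, ← sum_range_reflect]
  congr 1
  refine sum_congr rfl fun j hj ↦ ?_
  have hjk : j ≤ k := Nat.lt_succ_iff.1 (mem_range.1 hj)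
  rw [Nat.add_sub_cancel, Nat.choose_symm hjk, zsmul_eq_mul, Nat.cast_sub hjk, gsnFun]
  push_cast
  ring

theorem gsn_eq_fwdDiff_iter_s15 (a1 b1 a2 b2 : ℂ) (p q k : ℕ) :
    gsn a1 b1 a2 b2 p q k = 1 / (k.factorial : ℂ) * (Δ_[1])^[k] (gsnFun a1 b1 a2 b2 p q) 0 := by
  simpa using gsn_shift_eq_fwdDiff_iter a1 b1 a2 b2 0 p q k

theorem fwdDiff_iter_gsnFun_eq_zero (a1 b1 a2 b2 : ℂ) {p q n : ℕ} (h : p + q < n) :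
    (Δ_[1])^[n] (gsnFun a1 b1 a2 b2 p q) = 0 := by
  have hdeg : ((C a1 * X + C b1) ^ p * (C a2 * X + C b2) ^ q).natDegree ≤ p + q := by
    compute_degree
  have := Polynomial.fwdDiff_iter_eq_zero_of_degree_lt (hdeg.trans_lt h)
  convert this using 2
  ext x
  simp [gsnFun]

theorem gsn_eq_zero_of_lt (a1 b1 a2 b2 : ℂ) {p q k : ℕ} (h : p + q < k) :
    gsn a1 b1 a2 b2 p q k = 0 := by
  rw [gsn_eq_fwdDiff_iter_s15, fwdDiff_iter_gsnFun_eq_zero a1 b1 a2 b2 h, Pi.zero_apply, mul_zero]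

theorem gsn_add_eq_sum (a1 b1 a2 b2 : ℂ) (p1 p2 q1 q2 l : ℕ) :
    gsn a1 b1 a2 b2 (p1 + p2) (q1 + q2) l =
      ∑ m ∈ range (l + 1),
        gsn a1 b1 a2 b2 p2 q2 m * gsn a1 (a1 * m + b1) a2 (a2 * m + b2) p1 q1 (l - m) := by
  rw [gsn_eq_fwdDiff_iter_s15, gsnFun_add, fwdDiff_iter_mul, Nat.sum_antidiagonal_eq_sum_range_succ_mk,
    mul_sum]
  refine sum_congr rfl fun m hm ↦ ?_
  have hml : m ≤ l := Nat.lt_succ_iff.1 (mem_range.1 hm)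
  rw [gsn_eq_fwdDiff_iter_s15, gsn_shift_eq_fwdDiff_iter, zero_add, nsmul_one, Nat.cast_choose ℂ hml]
  field_simp [Nat.factorial_ne_zero]

theorem gsnZ_natCast (a1 b1 a2 b2 : ℂ) (p q n : ℕ) :
    gsnZ a1 b1 a2 b2 p q n = gsn a1 b1 a2 b2 p q n := by
  simp [gsnZ]

theorem gsnZ_of_neg (a1 b1 a2 b2 : ℂ) (p q : ℕ) {k : ℤ} (hk : k < 0) :
    gsnZ a1 b1 a2 b2 p q k = 0 :=
  if_pos hk

theorem stmt15 (a1 b1 a2 b2 : ℂ) (p1 p2 q1 q2 l : ℕ) :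
    gsn a1 b1 a2 b2 (p1 + p2) (q1 + q2) l =
      ∑ m ∈ range (p2 + q2 + 1),
        gsn a1 b1 a2 b2 p2 q2 m *
          gsnZ a1 (a1 * m + b1) a2 (a2 * m + b2) p1 q1 ((l : ℤ) - m) := by
  set summand : ℕ → ℂ := fun m ↦
    gsn a1 b1 a2 b2 p2 q2 m * gsnZ a1 (a1 * m + b1) a2 (a2 * m + b2) p1 q1 ((l : ℤ) - m)
  have summand_eq_zero_of_gt_degree : ∀ m ≥ p2 + q2 + 1, summand m = 0 := fun m hm ↦ by
    simp only [summand, gsn_eq_zero_of_lt a1 b1 a2 b2 hm, zero_mul]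
  have summand_eq_zero_of_gt_index : ∀ m ≥ l + 1, summand m = 0 := fun m hm ↦ by
    simp only [summand, gsnZ_of_neg _ _ _ _ _ _ (by omega : (l : ℤ) - m < 0), mul_zero]
  calc gsn a1 b1 a2 b2 (p1 + p2) (q1 + q2) l
      = ∑ m ∈ range (l + 1), summand m := by
        rw [gsn_add_eq_sum]
        refine sum_congr rfl fun m hm ↦ ?_
        simp only [summand, ← Nat.cast_sub (Nat.lt_succ_iff.1 (mem_range.1 hm)), gsnZ_natCast]
    _ = ∑ m ∈ range (l + 1 + (p2 + q2 + 1)), summand m :=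
        (eventually_constant_sum summand_eq_zero_of_gt_index (Nat.le_add_right _ _)).symm
    _ = ∑ m ∈ range (p2 + q2 + 1), summand m := by
        rw [add_comm]
        exact eventually_constant_sum summand_eq_zero_of_gt_degree (Nat.le_add_right _ _)
end

section
/- For nonnegative integers p1, p2 and l: S(p1+p2, l) = Σ_{m=0}^{p2} Σ_{j=0}^{p1} C(p1,j) m^{p1−j} S(j, l−m) S(p2, m), where S are the Stirling numbers of the second kind and S(j,k)=0 for k<0. -/
open Finset

/-! With `L g k = g (k - 1) + k * g k`, the recurrence of the Stirling numbers reads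
`S(p, ·) = Lᵖ δ₀`, hence `S(p₁ + p₂, ·) = L^p₁ (∑ₘ S(p₂, m) δₘ)`. Conjugating by the shift
`k ↦ k - m` turns `L` into `L + m`, and the binomial expansion of `(L + m)^p₁` gives the inner sum. -/

lemma stirling2_eq_zero_of_lt_s16 : ∀ {p k : ℕ}, p < k → stirling2 p k = 0
  | 0, _ + 1, _ => rfl
  | p + 1, k + 1, h => by
    rw [stirling2, stirling2_eq_zero_of_lt_s16 (by omega), stirling2_eq_zero_of_lt_s16 (by omega),
      mul_zero, add_zero]

lemma stirling2Z_of_neg (p : ℕ) {k : ℤ} (h : k < 0) : stirling2Z p k = 0 := if_pos h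

@[simp]
lemma stirling2Z_natCast (p n : ℕ) : stirling2Z p n = stirling2 p n := by
  simp [stirling2Z]

lemma stirling2Z_zero_left (k : ℤ) : stirling2Z 0 k = if k = 0 then 1 else 0 := by
  rcases lt_or_ge k 0 with h | h
  · rw [stirling2Z_of_neg _ h, if_neg h.ne]
  · lift k to ℕ using h
    rw [stirling2Z_natCast]
    cases k with
    | zero => rfl
    | succ k => rw [if_neg (by omega)]; rfl

lemma stirling2Z_succ (j : ℕ) (k : ℤ) :
    stirling2Z (j + 1) k = stirling2Z j (k - 1) + k * stirling2Z j k := by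
  rcases lt_or_ge k 0 with h | h
  · simp [stirling2Z_of_neg _ h, stirling2Z_of_neg _ (show k - 1 < 0 by omega)]
  · lift k to ℕ using h
    cases k with
    | zero => simp [stirling2Z, stirling2]
    | succ k =>
      rw [Nat.cast_succ, add_sub_cancel_right, ← Nat.cast_succ]
      simp only [stirling2Z_natCast, stirling2]
      push_cast
      ring

def stirlingStep : Module.End ℤ (ℤ → ℤ) where
  toFun g k := g (k - 1) + k * g k
  map_add' g h := by ext k; simp only [Pi.add_apply]; ring
  map_smul' c g := by ext k; simp only [Pi.smul_apply, smul_eq_mul, RingHom.id_apply]; ring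

def shiftBy (m : ℤ) : Module.End ℤ (ℤ → ℤ) := LinearMap.funLeft ℤ ℤ (· - m)

@[simp]
lemma stirlingStep_apply (g : ℤ → ℤ) (k : ℤ) : stirlingStep g k = g (k - 1) + k * g k := rfl

@[simp]
lemma shiftBy_apply (m : ℤ) (g : ℤ → ℤ) (k : ℤ) : shiftBy m g k = g (k - m) := rfl

lemma stirlingStep_pow_apply_stirling2Z_zero (j : ℕ) :
    (stirlingStep ^ j) (stirling2Z 0) = stirling2Z j := by
  induction j with
  | zero => rfl
  | succ j ih =>
    ext k
    rw [pow_succ', Module.End.mul_apply, ih, stirlingStep_apply, stirling2Z_succ]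

lemma semiconjBy_shiftBy (m : ℤ) :
    SemiconjBy (shiftBy m) (stirlingStep + (m : Module.End ℤ (ℤ → ℤ))) stirlingStep := by
  ext g k
  simp [Module.End.mul_apply, sub_right_comm k 1 m]
  ring

lemma stirlingStep_add_intCast_pow_apply (m : ℤ) (p : ℕ) (k : ℤ) :
    ((stirlingStep + (m : Module.End ℤ (ℤ → ℤ))) ^ p) (stirling2Z 0) k =
      ∑ j ∈ range (p + 1), (p.choose j : ℤ) * m ^ (p - j) * stirling2Z j k := by
  rw [(Int.commute_cast stirlingStep m).add_pow, LinearMap.sum_apply, Finset.sum_apply]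
  refine Finset.sum_congr rfl fun j _ => ?_
  rw [Module.End.mul_apply, Module.End.mul_apply, Module.End.natCast_apply, ← Int.cast_pow,
    Module.End.intCast_apply, map_zsmul, map_nsmul, stirlingStep_pow_apply_stirling2Z_zero,
    Pi.smul_apply, Pi.smul_apply, smul_eq_mul, nsmul_eq_mul]
  ring

lemma stirlingStep_pow_shiftBy_apply (m : ℤ) (p : ℕ) (k : ℤ) :
    (stirlingStep ^ p) (shiftBy m (stirling2Z 0)) k =
      ∑ j ∈ range (p + 1), (p.choose j : ℤ) * m ^ (p - j) * stirling2Z j (k - m) := by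
  rw [← Module.End.mul_apply, ← ((semiconjBy_shiftBy m).pow_right p).eq, Module.End.mul_apply,
    shiftBy_apply, stirlingStep_add_intCast_pow_apply]

lemma stirling2Z_eq_sum_shiftBy (p : ℕ) :
    stirling2Z p = ∑ m ∈ range (p + 1), (stirling2 p m : ℤ) • shiftBy m (stirling2Z 0) := by
  ext k
  simp only [Finset.sum_apply, Pi.smul_apply, shiftBy_apply, stirling2Z_zero_left, sub_eq_zero,
    smul_eq_mul, mul_ite, mul_one, mul_zero]
  rcases lt_or_ge k 0 with h | h
  · rw [stirling2Z_of_neg _ h, Finset.sum_eq_zero fun m _ => if_neg (by omega)]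
  · lift k to ℕ using h
    simp only [Nat.cast_inj, Finset.sum_ite_eq, Finset.mem_range, stirling2Z_natCast]
    split_ifs with hk
    · rfl
    · rw [stirling2_eq_zero_of_lt_s16 (by omega), Nat.cast_zero]

theorem stmt16 (p1 p2 l : ℕ) :
    (stirling2 (p1 + p2) l : ℤ) =
      ∑ m ∈ range (p2 + 1), ∑ j ∈ range (p1 + 1),
        (p1.choose j : ℤ) * (m : ℤ) ^ (p1 - j) * stirling2Z j ((l : ℤ) - m) *
          stirling2 p2 m := by
  rw [← stirling2Z_natCast, ← stirlingStep_pow_apply_stirling2Z_zero, pow_add,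
    Module.End.mul_apply, stirlingStep_pow_apply_stirling2Z_zero, stirling2Z_eq_sum_shiftBy,
    map_sum, Finset.sum_apply]
  refine Finset.sum_congr rfl fun m _ => ?_
  rw [map_smul, Pi.smul_apply, stirlingStep_pow_shiftBy_apply, smul_eq_mul, Finset.mul_sum]
  refine Finset.sum_congr rfl fun j _ => ?_
  ring
end
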